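/- Let W_k denote the longest common prefix of the words V_{k+1}V_k and V_kV_{k+1}, where V_k are defined by the binary recursion V_{k+1} = V_k^{a_{k+1}−b_{k+1}} V_{k−1} V_k^{b_{k+1}} with Ostrowski digits (b_k). Then W₀ = 0^{a₁−1−b₁} and W_{k+1} = V_{k+1}^{a_{k+2}−b_{k+2}} W_k for all k ≥ 0; consequently the length of W_k equals q_{k+1} + q_k − t_{k+1} − 2, where t_{k+1} = b₁ + b₂q₁ + ⋯ + b_{k+1}q_k. -/
import Mathlib


/-- `m`-fold concatenation of a word. -/
def wpow (W : List ℕ) : ℕ → List ℕ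
  | 0 => []
  | n + 1 => W ++ wpow W n

theorem wpow_zero (W : List ℕ) : wpow W 0 = [] := rfl

theorem wpow_succ (W : List ℕ) (n : ℕ) : wpow W (n + 1) = W ++ wpow W n := rfl

theorem wpow_length (W : List ℕ) (n : ℕ) : (wpow W n).length = n * W.length := by
  induction n with
  | zero => simp [wpow_zero]
  | succ n ih => simp [wpow_succ, ih]; ring

theorem wpow_comm (W : List ℕ) (n : ℕ) : wpow W n ++ W = W ++ wpow W n := by
  induction n with
  | zero => simp [wpow_zero]
  | succ n ih => simp only [wpow_succ, List.append_assoc, ih]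

theorem wpow_succ' (W : List ℕ) (n : ℕ) : wpow W (n + 1) = wpow W n ++ W := by
  rw [wpow_succ, wpow_comm]

theorem wpow_replicate (x : ℕ) (n : ℕ) : wpow [x] n = List.replicate n x := by
  induction n with
  | zero => simp [wpow_zero]
  | succ n ih => simp [wpow_succ, ih, List.replicate_succ]

theorem prefix_getElem? {u A : List ℕ} (h : u <+: A) {i : ℕ} (hi : i < u.length) :
    A[i]? = u[i]? := by
  obtain ⟨r, rfl⟩ := h
  exact List.getElem?_append_left hi

theorem prefix_append_of_prefix {u v w : List ℕ} (h : u <+: v) :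
    w ++ u <+: w ++ v := by
  obtain ⟨r, rfl⟩ := h
  exact ⟨r, by simp⟩

theorem pow_shift_left (X Y : List ℕ) (c d : ℕ) :
    (wpow X c ++ Y ++ wpow X d) ++ X = wpow X c ++ ((Y ++ X) ++ wpow X d) := by
  calc (wpow X c ++ Y ++ wpow X d) ++ X
      = wpow X c ++ (Y ++ (wpow X d ++ X)) := by simp [List.append_assoc]
    _ = wpow X c ++ (Y ++ (X ++ wpow X d)) := by rw [wpow_comm]
    _ = wpow X c ++ ((Y ++ X) ++ wpow X d) := by simp [List.append_assoc]

theorem pow_shift_right (X Y : List ℕ) (c d : ℕ) :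
    X ++ (wpow X c ++ Y ++ wpow X d) = wpow X c ++ ((X ++ Y) ++ wpow X d) := by
  have h : X ++ wpow X c = wpow X c ++ X := (wpow_comm X c).symm
  calc X ++ (wpow X c ++ Y ++ wpow X d)
      = (X ++ wpow X c) ++ Y ++ wpow X d := by simp [List.append_assoc]
    _ = (wpow X c ++ X) ++ Y ++ wpow X d := by rw [h]
    _ = wpow X c ++ ((X ++ Y) ++ wpow X d) := by simp [List.append_assoc]

theorem lcp_unique {A B L M : List ℕ} (hLA : L <+: A) (hLB : L <+: B)
    (hdiff : A[L.length]? ≠ B[L.length]?)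
    (hMA : M <+: A) (hMB : M <+: B)
    (hmax : ∀ u, u <+: A → u <+: B → u.length ≤ M.length) : M = L := by
  have h1 : M.length ≤ L.length := by
    by_contra h
    push_neg at h
    apply hdiff
    rw [prefix_getElem? hMA h, prefix_getElem? hMB h]
  have h2 : L.length ≤ M.length := hmax L hLA hLB
  rcases List.prefix_or_prefix_of_prefix hLA hMA with h3 | h3
  · exact (h3.eq_of_length (by omega)).symm
  · exact h3.eq_of_length (by omega)

/-- Let `W_k` be the longest common prefix of `V_{k+1}V_k` and `V_kV_{k+1}`.
Then `W₀ = 0^{a₁−1−b₁}`, `W_{k+1} = V_{k+1}^{a_{k+2}−b_{k+2}} W_k` and the length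
of `W_k` equals `q_{k+1} + q_k − t_{k+1} − 2`. -/
theorem longest_common_prefix_formula (a b : ℕ → ℕ) (ha : ∀ k : ℕ, 1 ≤ k → 1 ≤ a k)
    (hb1 : b 1 ≤ a 1 - 1) (hb : ∀ k : ℕ, 2 ≤ k → b k ≤ a k)
    (hrule : ∀ k : ℕ, 1 ≤ k → b (k + 1) = a (k + 1) → b k = 0)
    (q : ℕ → ℕ) (hq0 : q 0 = 1) (hq1 : q 1 = a 1)
    (hq : ∀ k : ℕ, 1 ≤ k → q (k + 1) = a (k + 1) * q k + q (k - 1))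
    (t : ℕ → ℕ) (ht : ∀ k : ℕ, t k = ∑ j ∈ Finset.range k, b (j + 1) * q j)
    (V : ℕ → List ℕ) (hV0 : V 0 = [0])
    (hV1 : V 1 = wpow [0] (a 1 - b 1 - 1) ++ [1] ++ wpow [0] (b 1))
    (hV : ∀ k : ℕ, 1 ≤ k →
      V (k + 1) = wpow (V k) (a (k + 1) - b (k + 1)) ++ V (k - 1) ++ wpow (V k) (b (k + 1)))
    (W : ℕ → List ℕ)
    (hW : ∀ k : ℕ, W k <+: (V (k + 1) ++ V k) ∧ W k <+: (V k ++ V (k + 1)) ∧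
      ∀ u : List ℕ, u <+: (V (k + 1) ++ V k) → u <+: (V k ++ V (k + 1)) →
        u.length ≤ (W k).length) :
    W 0 = wpow [0] (a 1 - 1 - b 1) ∧
    (∀ k : ℕ, W (k + 1) = wpow (V (k + 1)) (a (k + 2) - b (k + 2)) ++ W k) ∧
    (∀ k : ℕ, (W k).length = q (k + 1) + q k - t (k + 1) - 2) := by
  have ha1 : 1 ≤ a 1 := ha 1 le_rfl
  -- recursion for V in convenient form
  have hVs : ∀ k : ℕ, V (k + 2) =
      wpow (V (k + 1)) (a (k + 2) - b (k + 2)) ++ V k ++ wpow (V (k + 1)) (b (k + 2)) := by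
    intro k
    have := hV (k + 1) (by omega)
    simpa using this
  -- positivity of q
  have hqpos : ∀ k : ℕ, 1 ≤ q k ∧ 1 ≤ q (k + 1) := by
    intro k
    induction k with
    | zero =>
      refine ⟨by omega, ?_⟩
      show 1 ≤ q 1
      omega
    | succ k ih =>
      refine ⟨ih.2, ?_⟩
      have hrec := hq (k + 1) (by omega)
      simp only [Nat.add_sub_cancel] at hrec
      have : 1 * 1 ≤ a (k + 2) * q (k + 1) := Nat.mul_le_mul (ha _ (by omega)) ih.2
      omega
  -- length of V
  have hVlen : ∀ k : ℕ, (V k).length = q k := by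
    have main : ∀ k : ℕ, (V k).length = q k ∧ (V (k + 1)).length = q (k + 1) := by
      intro k
      induction k with
      | zero =>
        constructor
        · simp [hV0, hq0]
        · show (V 1).length = q 1
          rw [hV1, hq1]
          simp [wpow_length]
          omega
      | succ k ih =>
        refine ⟨ih.2, ?_⟩
        rw [hVs k]
        have hrec := hq (k + 1) (by omega)
        simp only [Nat.add_sub_cancel] at hrec
        have hba : b (k + 2) ≤ a (k + 2) := hb _ (by omega)
        obtain ⟨c, hc⟩ : ∃ c, a (k + 2) = c + b (k + 2) := ⟨a (k + 2) - b (k + 2), by omega⟩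
        simp [wpow_length, ih.1, ih.2, hrec, hc, Nat.add_sub_cancel]
        ring
    exact fun k => (main k).1
  -- t recursion
  have htstep : ∀ k : ℕ, t (k + 1) = t k + b (k + 1) * q k := by
    intro k
    rw [ht, ht, Finset.sum_range_succ]
  have ht1 : t 1 = b 1 := by
    rw [ht]
    simp [hq0]
  have ht0 : t 0 = 0 := by rw [ht]; simp
  -- t bound : t (k+1) + 1 ≤ q (k+1)
  have htbound : ∀ k : ℕ, t k + 1 ≤ q k ∧ t (k + 1) + 1 ≤ q (k + 1) := by
    intro k
    induction k with
    | zero =>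
      constructor
      · omega
      · show t 1 + 1 ≤ q 1
        rw [ht1, hq1]; omega
    | succ k ih =>
      refine ⟨ih.2, ?_⟩
      have hrec := hq (k + 1) (by omega)
      simp only [Nat.add_sub_cancel] at hrec
      have hts := htstep (k + 1)
      rcases eq_or_lt_of_le (hb (k + 2) (by omega)) with heq | hlt
      · -- b (k+2) = a (k+2), hence b (k+1) = 0
        have hb0 : b (k + 1) = 0 := hrule (k + 1) (by omega) heq
        have hts' := htstep k
        rw [hb0] at hts'
        simp at hts'
        have h0 := ih.1
        rw [heq] at hts
        set A := a (k + 2) * q (k + 1) with hA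
        omega
      · have hmm : (b (k + 2) + 1) * q (k + 1) ≤ a (k + 2) * q (k + 1) :=
          Nat.mul_le_mul_right _ (by omega)
        rw [Nat.add_mul, one_mul] at hmm
        have h1 := ih.2
        set A := a (k + 2) * q (k + 1) with hA
        set B := b (k + 2) * q (k + 1) with hB
        omega
  -- base case: W 0
  have hm01 : a 1 - b 1 - 1 = a 1 - 1 - b 1 := by omega
  have hV1' : V 1 = wpow [0] (a 1 - 1 - b 1) ++ ([1] ++ wpow [0] (b 1)) := by
    rw [hV1, hm01]
    simp [List.append_assoc]
  have hlen0 : (wpow [0] (a 1 - 1 - b 1)).length = a 1 - 1 - b 1 := by simp [wpow_length]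
  have hA0 : V 1 ++ V 0 = wpow [0] (a 1 - 1 - b 1) ++ ([1] ++ (wpow [0] (b 1) ++ [0])) := by
    rw [hV1', hV0]
    simp [List.append_assoc]
  have hB0 : V 0 ++ V 1 = wpow [0] (a 1 - 1 - b 1 + 1) ++ ([1] ++ wpow [0] (b 1)) := by
    rw [hV1', hV0, wpow_succ]
    simp [List.append_assoc]
  have hL0A : wpow [0] (a 1 - 1 - b 1) <+: V 1 ++ V 0 := by
    rw [hA0]; exact List.prefix_append _ _
  have hL0B : wpow [0] (a 1 - 1 - b 1) <+: V 0 ++ V 1 := by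
    rw [hB0]
    exact (wpow_succ' [0] _ ▸ List.prefix_append (wpow [0] (a 1 - 1 - b 1)) [0]).trans
      (List.prefix_append _ _)
  have e1 : (V 1 ++ V 0)[a 1 - 1 - b 1]? = some 1 := by
    rw [hA0, List.getElem?_append_right (by rw [hlen0]), hlen0, Nat.sub_self]
    simp
  have e2 : (V 0 ++ V 1)[a 1 - 1 - b 1]? = some 0 := by
    rw [hB0, List.getElem?_append_left (by rw [wpow_length]; simp)]
    rw [wpow_replicate]
    simp [List.getElem?_replicate]
  have hdiff0 : (V 1 ++ V 0)[(wpow [0] (a 1 - 1 - b 1)).length]? ≠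
      (V 0 ++ V 1)[(wpow [0] (a 1 - 1 - b 1)).length]? := by
    rw [hlen0, e1, e2]
    simp
  have hW0 : W 0 = wpow [0] (a 1 - 1 - b 1) := by
    obtain ⟨h1, h2, h3⟩ := hW 0
    exact lcp_unique hL0A hL0B hdiff0 h1 h2 h3
  -- the inductive step
  have hstep : ∀ k : ℕ,
      (V (k + 1) ++ V k)[(W k).length]? ≠ (V k ++ V (k + 1))[(W k).length]? →
      W (k + 1) = wpow (V (k + 1)) (a (k + 2) - b (k + 2)) ++ W k ∧
      (V (k + 2) ++ V (k + 1))[(W (k + 1)).length]? ≠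
        (V (k + 1) ++ V (k + 2))[(W (k + 1)).length]? := by
    intro k hdiff
    obtain ⟨hWA, hWB, _⟩ := hW k
    have hA : V (k + 2) ++ V (k + 1) = wpow (V (k + 1)) (a (k + 2) - b (k + 2)) ++
        ((V k ++ V (k + 1)) ++ wpow (V (k + 1)) (b (k + 2))) := by
      rw [hVs k]
      exact pow_shift_left _ _ _ _
    have hB : V (k + 1) ++ V (k + 2) = wpow (V (k + 1)) (a (k + 2) - b (k + 2)) ++
        ((V (k + 1) ++ V k) ++ wpow (V (k + 1)) (b (k + 2))) := by
      rw [hVs k]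
      exact pow_shift_right _ _ _ _
    have hLA : wpow (V (k + 1)) (a (k + 2) - b (k + 2)) ++ W k <+: V (k + 2) ++ V (k + 1) := by
      rw [hA]
      exact prefix_append_of_prefix (hWB.trans (List.prefix_append _ _))
    have hLB : wpow (V (k + 1)) (a (k + 2) - b (k + 2)) ++ W k <+: V (k + 1) ++ V (k + 2) := by
      rw [hB]
      exact prefix_append_of_prefix (hWA.trans (List.prefix_append _ _))
    have hmlt : (W k).length < (V k).length + (V (k + 1)).length := by
      by_contra h
      push_neg at h
      apply hdiff
      rw [List.getElem?_eq_none (by simp; omega), List.getElem?_eq_none (by simp; omega)]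
    have hLlen : (wpow (V (k + 1)) (a (k + 2) - b (k + 2)) ++ W k).length =
        (wpow (V (k + 1)) (a (k + 2) - b (k + 2))).length + (W k).length := by simp
    have hsub : (wpow (V (k + 1)) (a (k + 2) - b (k + 2)) ++ W k).length -
        (wpow (V (k + 1)) (a (k + 2) - b (k + 2))).length = (W k).length := by
      rw [hLlen, Nat.add_sub_cancel_left]
    have eA : (V (k + 2) ++ V (k + 1))[(wpow (V (k + 1)) (a (k + 2) - b (k + 2)) ++
        W k).length]? = (V k ++ V (k + 1))[(W k).length]? := by
      rw [hA, List.getElem?_append_right (by rw [hLlen]; omega), hsub,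
        List.getElem?_append_left (by simp; omega)]
    have eB : (V (k + 1) ++ V (k + 2))[(wpow (V (k + 1)) (a (k + 2) - b (k + 2)) ++
        W k).length]? = (V (k + 1) ++ V k)[(W k).length]? := by
      rw [hB, List.getElem?_append_right (by rw [hLlen]; omega), hsub,
        List.getElem?_append_left (by simp; omega)]
    have hdiff' : (V (k + 2) ++ V (k + 1))[(wpow (V (k + 1)) (a (k + 2) - b (k + 2)) ++
        W k).length]? ≠ (V (k + 1) ++ V (k + 2))[(wpow (V (k + 1)) (a (k + 2) - b (k + 2)) ++
        W k).length]? := by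
      rw [eA, eB]
      exact fun h => hdiff h.symm
    obtain ⟨h1, h2, h3⟩ := hW (k + 1)
    have hWk1 : W (k + 1) = wpow (V (k + 1)) (a (k + 2) - b (k + 2)) ++ W k :=
      lcp_unique hLA hLB hdiff' h1 h2 h3
    refine ⟨hWk1, ?_⟩
    rw [hWk1]
    exact hdiff'
  -- the difference property for all k
  have hD : ∀ k : ℕ,
      (V (k + 1) ++ V k)[(W k).length]? ≠ (V k ++ V (k + 1))[(W k).length]? := by
    intro k
    induction k with
    | zero => rw [hW0]; exact hdiff0
    | succ k ih => exact (hstep k ih).2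
  refine ⟨hW0, fun k => (hstep k (hD k)).1, ?_⟩
  -- length formula
  intro k
  induction k with
  | zero =>
    rw [hW0, hlen0]
    show _ = q 1 + q 0 - t 1 - 2
    rw [hq1, hq0, ht1]
    omega
  | succ k ih =>
    rw [(hstep k (hD k)).1]
    have hrec := hq (k + 1) (by omega)
    simp only [Nat.add_sub_cancel] at hrec
    have hba : b (k + 2) ≤ a (k + 2) := hb _ (by omega)
    have hbd := (htbound (k + 1)).1
    have hq1pos := (hqpos k).1
    have hts := htstep (k + 1)
    have e1 : (a (k + 2) - b (k + 2)) * q (k + 1) + b (k + 2) * q (k + 1)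
        = a (k + 2) * q (k + 1) := by
      rw [← Nat.add_mul]
      congr 1
      omega
    simp only [List.length_append, wpow_length, hVlen, ih]
    set A := a (k + 2) * q (k + 1) with hA
    set B := b (k + 2) * q (k + 1) with hB
    set C := (a (k + 2) - b (k + 2)) * q (k + 1) with hC
    omega
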